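/- Let (x^k) be generated by the augmented Lagrangian method (Algorithm 3.1) applied to the partially penalized GNEP, under Assumption 3.2 with (ε_k) bounded and ε'_k → 0, and let x̄ be a limit point of (x^k). If, for every player ν, the function h^ν satisfies CPLD_ν at x̄, then x̄ is a KKT point of the Feasibility GNEP, i.e. for every ν there exists w^ν ∈ ℝ^{p_ν} with ∇_{x^ν}‖g_+^ν(x̄)‖² + ∇_{x^ν}h^ν(x̄) w^ν = 0 and min{−h^ν(x̄), w^ν} = 0. -/

import Mathlib

/-!
Pass to a subsequence along which `x^{k+1} → x̄`. If the penalty parameter `ρ_ν` stays bounded,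
it is eventually constant, so the residual `‖min {-g^ν, λ^ν}‖` eventually decreases
geometrically; hence `g^ν(x̄) ≤ 0`, `x̄` minimises `‖g^ν₊‖²` and `w^ν = 0` works.
If `ρ_ν → ∞`, dividing the approximate stationarity of the subproblems by `ρ_ν` shows that
nonnegative combinations of active gradients `∇h_j^ν(x^{k+1})` converge to
`-∑ᵢ (g_i^ν(x̄))₊ ∇g_i^ν(x̄)`. By conic Carathéodory these combinations may be taken over
linearly independent gradients, and CPLD prevents the normalised coefficients from
escaping to infinity, so the limit is a nonnegative combination of the active gradients at `x̄`.
-/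

open Filter Topology Finset Function RealInnerProductSpace

/-- The strategy space of a GNEP: one Euclidean block per player. -/
abbrev Strat {N : ℕ} (n : Fin N → ℕ) := (ν : Fin N) → EuclideanSpace ℝ (Fin (n ν))

/-- Partial gradient of `f : Strat n → ℝ` with respect to player `ν`'s block at `x`. -/
noncomputable def pgrad {N : ℕ} {n : Fin N → ℕ} (ν : Fin N)
    (f : Strat n → ℝ) (x : Strat n) : EuclideanSpace ℝ (Fin (n ν)) :=
  gradient (fun z => f (Function.update x ν z)) (x ν)

/-- Positive linear dependence of a family on a finite index set. -/
def PosLinDep {ι E : Type*} [AddCommGroup E] [Module ℝ E]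
    (s : Finset ι) (v : ι → E) : Prop :=
  ∃ a : ι → ℝ, (∀ i, 0 ≤ a i) ∧ (∃ i ∈ s, a i ≠ 0) ∧ ∑ i ∈ s, a i • v i = 0

/-- Linear dependence of a family on a finite index set. -/
def LinDep {ι E : Type*} [AddCommGroup E] [Module ℝ E]
    (s : Finset ι) (v : ι → E) : Prop :=
  ∃ a : ι → ℝ, (∃ i ∈ s, a i ≠ 0) ∧ ∑ i ∈ s, a i • v i = 0

/-- CPLD with respect to player `ν`. -/
def CPLDnu {N : ℕ} {n : Fin N → ℕ} {ι : Type*} (ν : Fin N)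
    (c : ι → Strat n → ℝ) (x : Strat n) : Prop :=
  ∀ I : Finset ι, (∀ i ∈ I, c i x = 0) →
    PosLinDep I (fun i => pgrad ν (c i) x) →
    ∃ U ∈ 𝓝 x, ∀ y ∈ U, LinDep I (fun i => pgrad ν (c i) y)

/-- EMFCQ with respect to player `ν`. -/
def EMFCQnu {N : ℕ} {n : Fin N → ℕ} {ι : Type*} (ν : Fin N)
    (c : ι → Strat n → ℝ) (x : Strat n) : Prop :=
  ∃ d : EuclideanSpace ℝ (Fin (n ν)), ∀ i, 0 ≤ c i x → inner (𝕜 := ℝ) (pgrad ν (c i) x) d < 0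


section PartialGradient

variable {N : ℕ} {n : Fin N → ℕ}

lemma pgrad_eq_of_hasFDerivAt {f : Strat n → ℝ} {D : Strat n →L[ℝ] ℝ} {x : Strat n} (ν : Fin N)
    (hf : HasFDerivAt f D x) :
    pgrad ν f x = (InnerProductSpace.toDual ℝ _).symm
      (D.comp (.pi (Pi.single ν (.id ℝ (EuclideanSpace ℝ (Fin (n ν))))))) := by
  rw [← update_eq_self ν x] at hf
  exact congrArg _ (hf.comp (x ν) (hasFDerivAt_update x (x ν))).fderiv

lemma continuous_pgrad {f : Strat n → ℝ} (hf : ContDiff ℝ 1 f) (ν : Fin N) :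
    Continuous (pgrad ν f) := by
  have hpgrad : pgrad ν f = fun x => (InnerProductSpace.toDual ℝ _).symm
      ((fderiv ℝ f x).comp (.pi (Pi.single ν (.id ℝ (EuclideanSpace ℝ (Fin (n ν))))))) :=
    funext fun x => pgrad_eq_of_hasFDerivAt ν (hf.differentiable one_ne_zero x).hasFDerivAt
  rw [hpgrad]
  exact (LinearIsometryEquiv.continuous _).comp
    ((hf.continuous_fderiv one_ne_zero).clm_comp continuous_const)

lemma hasDerivAt_max_zero_sq (t : ℝ) : HasDerivAt (fun s => max s 0 ^ 2) (2 * max t 0) t := by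
  rcases lt_trichotomy t 0 with ht | rfl | ht
  · have hzero : (fun s : ℝ => max s 0 ^ 2) =ᶠ[𝓝 t] fun _ => 0 := by
      filter_upwards [eventually_lt_nhds ht] with s hs
      simp [hs.le]
    simpa [ht.le] using (hasDerivAt_const t (0 : ℝ)).congr_of_eventuallyEq hzero
  · rw [max_self, mul_zero, hasDerivAt_iff_isLittleO_nhds_zero]
    refine (Asymptotics.isBigO_of_le _ fun s => ?_).trans_isLittleO
      (Asymptotics.isLittleO_pow_id one_lt_two)
    rcases le_total s 0 with hs | hs <;> simp [hs, sq_nonneg]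
  · have hsq : (fun s : ℝ => max s 0 ^ 2) =ᶠ[𝓝 t] fun s => s ^ 2 := by
      filter_upwards [eventually_gt_nhds ht] with s hs
      simp [hs.le]
    simpa [ht.le, mul_comm] using (hasDerivAt_pow 2 t).congr_of_eventuallyEq hsq

lemma pgrad_sum_max_zero_sq {ι : Type*} [Fintype ι] {g : ι → Strat n → ℝ} {x : Strat n}
    (hg : ∀ i, DifferentiableAt ℝ (g i) x) (ν : Fin N) :
    pgrad ν (fun y => ∑ i, max (g i y) 0 ^ 2) x = ∑ i, (2 * max (g i x) 0) • pgrad ν (g i) x := by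
  have hsum : HasFDerivAt (fun y => ∑ i, max (g i y) 0 ^ 2)
      (∑ i, (2 * max (g i x) 0) • fderiv ℝ (g i) x) x := HasFDerivAt.fun_sum fun i _ =>
    (hasDerivAt_max_zero_sq (g i x)).comp_hasFDerivAt x (hg i).hasFDerivAt
  have hcomp : ∀ L : EuclideanSpace ℝ (Fin (n ν)) →L[ℝ] Strat n,
      (∑ i, (2 * max (g i x) 0) • fderiv ℝ (g i) x).comp L
        = ∑ i, (2 * max (g i x) 0) • (fderiv ℝ (g i) x).comp L := fun L => by
    ext; simp
  simp only [pgrad_eq_of_hasFDerivAt ν hsum, pgrad_eq_of_hasFDerivAt ν (hg _).hasFDerivAt, hcomp,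
    map_sum, map_smul]

end PartialGradient

section ConicCombination

variable {ι E : Type*} [AddCommGroup E] [Module ℝ E]

lemma LinearIndepOn.not_linDep {s : Finset ι} {v : ι → E} (hv : LinearIndepOn ℝ v (s : Set ι)) :
    ¬ LinDep s v := fun ⟨a, ⟨i, hi, hai⟩, hsum⟩ => hai (linearIndepOn_finset_iff.mp hv a hsum i hi)

/-- One step of conic Carathéodory: moving along a linear relation with a positive coefficient
until the first coefficient vanishes. -/
lemma exists_erase_conic_repr [DecidableEq ι] {A : Finset ι} {v : ι → E} {c G : ι → ℝ}
    (hc : ∀ j ∈ A, 0 ≤ c j) (hG : ∑ j ∈ A, G j • v j = 0) (hpos : ∃ j ∈ A, 0 < G j) :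
    ∃ j₀ ∈ A, ∃ c' : ι → ℝ, (∀ j ∈ A.erase j₀, 0 ≤ c' j) ∧
      ∑ j ∈ A.erase j₀, c' j • v j = ∑ j ∈ A, c j • v j := by
  have hP : (A.filter (0 < G ·)).Nonempty := by
    obtain ⟨j, hj, hGj⟩ := hpos
    exact ⟨j, Finset.mem_filter.mpr ⟨hj, hGj⟩⟩
  obtain ⟨j₀, hj₀, hmin⟩ := Finset.exists_min_image _ (fun j => c j / G j) hP
  rw [Finset.mem_filter] at hj₀
  set t := c j₀ / G j₀
  have ht : 0 ≤ t := div_nonneg (hc j₀ hj₀.1) hj₀.2.le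
  refine ⟨j₀, hj₀.1, fun j => c j - t * G j, fun j hj => ?_, ?_⟩
  · have hjA := Finset.mem_of_mem_erase hj
    rcases le_or_gt (G j) 0 with hGj | hGj
    · nlinarith [hc j hjA]
    · have := hmin j (Finset.mem_filter.mpr ⟨hjA, hGj⟩)
      rw [le_div_iff₀ hGj] at this
      linarith
  · have hvanish : (c j₀ - t * G j₀) • v j₀ = 0 := by
      rw [div_mul_cancel₀ _ hj₀.2.ne', sub_self, zero_smul]
    rw [Finset.sum_erase A (f := fun j => (c j - t * G j) • v j) hvanish]
    simp only [sub_smul, Finset.sum_sub_distrib, mul_smul, ← Finset.smul_sum, hG, smul_zero,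
      sub_zero]

theorem exists_linearIndepOn_conic_repr [DecidableEq ι] (A : Finset ι) (v : ι → E)
    {c : ι → ℝ} (hc : ∀ j ∈ A, 0 ≤ c j) :
    ∃ I ⊆ A, ∃ e : ι → ℝ, (∀ j ∈ I, 0 ≤ e j) ∧ ∑ j ∈ I, e j • v j = ∑ j ∈ A, c j • v j ∧
      LinearIndepOn ℝ v (I : Set ι) := by
  induction A using Finset.strongInduction generalizing c with
  | _ A ih =>
  by_cases hli : LinearIndepOn ℝ v (A : Set ι)
  · exact ⟨A, subset_rfl, c, hc, rfl, hli⟩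
  obtain ⟨G, hG, i, hi, hGi⟩ := not_linearIndepOn_finset_iff.mp hli
  have hrel : ∃ G' : ι → ℝ, ∑ j ∈ A, G' j • v j = 0 ∧ ∃ j ∈ A, 0 < G' j := by
    rcases hGi.lt_or_gt with hneg | hpos
    · exact ⟨-G, by simp [neg_smul, hG], i, hi, neg_pos.mpr hneg⟩
    · exact ⟨G, hG, i, hi, hpos⟩
  obtain ⟨G', hG', hpos⟩ := hrel
  obtain ⟨j₀, hj₀, c', hc', hsum⟩ := exists_erase_conic_repr hc hG' hpos
  obtain ⟨I, hI, e, he, hesum, hli⟩ := ih _ (Finset.erase_ssubset hj₀) hc'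
  exact ⟨I, hI.trans (Finset.erase_subset _ _), e, he, hesum.trans hsum, hli⟩

end ConicCombination

section LimitsOfConicCombinations

variable {ι E : Type*} [Fintype ι] [NormedAddCommGroup E] [NormedSpace ℝ E]

/-- `α` and `w` are subsequential limits of `1 / D l` and `e l / D l`, where
`D l = 1 + ∑ j ∈ S, e l j`; these stay in a compact set. -/
lemma exists_normalized_limit_of_tendsto (S : Finset ι) {a : ℕ → ι → E} {a₀ : ι → E}
    (ha : ∀ j, Tendsto (fun l => a l j) atTop (𝓝 (a₀ j))) {e : ℕ → ι → ℝ}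
    (he : ∀ l, ∀ j ∈ S, 0 ≤ e l j) {v : E}
    (hv : Tendsto (fun l => ∑ j ∈ S, e l j • a l j) atTop (𝓝 v)) :
    ∃ α : ℝ, ∃ w : ι → ℝ, 0 ≤ α ∧ (∀ j, 0 ≤ w j) ∧ (∀ j ∉ S, w j = 0) ∧ α + ∑ j ∈ S, w j = 1 ∧
      ∑ j ∈ S, w j • a₀ j = α • v := by
  classical
  set D : ℕ → ℝ := fun l => 1 + ∑ j ∈ S, e l j
  have hD : ∀ l, 1 ≤ D l := fun l =>
    le_add_of_nonneg_right (Finset.sum_nonneg (he l))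
  have hDpos : ∀ l, 0 < D l := fun l => one_pos.trans_le (hD l)
  set z : ℕ → ℝ × (ι → ℝ) := fun l => ((D l)⁻¹, fun j => if j ∈ S then e l j / D l else 0)
  have hz : ∀ l, z l ∈ Set.Icc (0 : ℝ) 1 ×ˢ Set.univ.pi fun _ => Set.Icc (0 : ℝ) 1 := by
    refine fun l => ⟨⟨inv_nonneg.mpr (hDpos l).le, inv_le_one_of_one_le₀ (hD l)⟩,
      fun j _ => ?_⟩
    by_cases hj : j ∈ S
    · have : e l j ≤ D l :=
        (Finset.single_le_sum (he l) hj).trans (le_add_of_nonneg_left zero_le_one)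
      simpa [z, hj, div_le_one (hDpos l)] using ⟨div_nonneg (he l j hj) (hDpos l).le, this⟩
    · simp [z, hj]
  obtain ⟨⟨α, w⟩, ⟨hα, hw⟩, φ, hφ, hzφ⟩ :=
    (isCompact_Icc.prod (isCompact_univ_pi fun _ => isCompact_Icc)).tendsto_subseq hz
  have hαlim : Tendsto (fun l => (z (φ l)).1) atTop (𝓝 α) := (continuous_fst.tendsto _).comp hzφ
  have hwlim : ∀ j, Tendsto (fun l => (z (φ l)).2 j) atTop (𝓝 (w j)) := fun j =>
    ((continuous_apply j).tendsto _).comp ((continuous_snd.tendsto _).comp hzφ)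
  have hw_supp : ∀ j ∉ S, w j = 0 := fun j hj =>
    tendsto_nhds_unique (hwlim j) (by simp [z, hj])
  have hsum_one : ∀ l, (z l).1 + ∑ j ∈ S, (z l).2 j = 1 := fun l => by
    have : ∑ j ∈ S, (z l).2 j = (∑ j ∈ S, e l j) / D l := by
      rw [Finset.sum_div]
      exact Finset.sum_congr rfl fun j hj => if_pos hj
    rw [this]
    show (D l)⁻¹ + _ = 1
    rw [inv_eq_one_div, ← add_div, div_self (hDpos l).ne']
  have hcomb : ∀ l, ∑ j ∈ S, (z l).2 j • a l j = (z l).1 • ∑ j ∈ S, e l j • a l j := fun l => by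
    rw [Finset.smul_sum]
    refine Finset.sum_congr rfl fun j hj => ?_
    rw [smul_smul]
    exact congrArg (· • a l j) ((if_pos hj).trans (div_eq_inv_mul _ _))
  refine ⟨α, w, hα.1, fun j => (hw j (Set.mem_univ j)).1, hw_supp, ?_, ?_⟩
  · exact tendsto_nhds_unique (hαlim.add (tendsto_finsetSum _ fun j _ => hwlim j))
      (by simp only [hsum_one, tendsto_const_nhds])
  · refine tendsto_nhds_unique (tendsto_finsetSum _ fun j _ =>
      (hwlim j).smul ((ha j).comp hφ.tendsto_atTop)) ?_
    exact (hαlim.smul (hv.comp hφ.tendsto_atTop)).congr fun l => (hcomb (φ l)).symm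

theorem exists_nonneg_repr_or_posLinDep_of_tendsto (S : Finset ι) {a : ℕ → ι → E}
    {a₀ : ι → E} (ha : ∀ j, Tendsto (fun l => a l j) atTop (𝓝 (a₀ j))) {e : ℕ → ι → ℝ}
    (he : ∀ l, ∀ j ∈ S, 0 ≤ e l j) {v : E}
    (hv : Tendsto (fun l => ∑ j ∈ S, e l j • a l j) atTop (𝓝 v)) :
    (∃ s : ι → ℝ, (∀ j, 0 ≤ s j) ∧ (∀ j ∉ S, s j = 0) ∧ ∑ j ∈ S, s j • a₀ j = v) ∨
      PosLinDep S a₀ := by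
  obtain ⟨α, w, hα, hw, hw_supp, hsum, hcomb⟩ := exists_normalized_limit_of_tendsto S ha he hv
  rcases hα.eq_or_lt with rfl | hα
  · refine Or.inr ⟨w, hw, ?_, by rw [hcomb, zero_smul]⟩
    by_contra! hzero
    rw [Finset.sum_eq_zero hzero] at hsum
    norm_num at hsum
  · refine Or.inl ⟨α⁻¹ • w, fun j => mul_nonneg (inv_nonneg.mpr hα.le) (hw j),
      fun j hj => by simp [hw_supp j hj], ?_⟩
    calc ∑ j ∈ S, (α⁻¹ • w) j • a₀ j = α⁻¹ • ∑ j ∈ S, w j • a₀ j := by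
          simp only [Finset.smul_sum, Pi.smul_apply, smul_eq_mul, mul_smul]
      _ = v := by rw [hcomb, inv_smul_smul₀ hα.ne']

end LimitsOfConicCombinations

/-- A support `S` given by conic Carathéodory recurs along a subsequence; CPLD forbids the
gradients indexed by `S` from becoming positively dependent in the limit. -/
theorem CPLDnu.exists_nonneg_repr_of_tendsto {N : ℕ} {n : Fin N → ℕ} {ι : Type*} [Fintype ι]
    {ν : Fin N} {c : ι → Strat n → ℝ} {xbar : Strat n} (hcpld : CPLDnu ν c xbar)
    (hc : ∀ j, ContinuousAt (pgrad ν (c j)) xbar) {y : ℕ → Strat n}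
    (hy : Tendsto y atTop (𝓝 xbar)) {d : ℕ → ι → ℝ} (hd : ∀ l j, 0 ≤ d l j)
    (hd_active : ∀ l j, c j xbar ≠ 0 → d l j = 0) {v : EuclideanSpace ℝ (Fin (n ν))}
    (hv : Tendsto (fun l => ∑ j, d l j • pgrad ν (c j) (y l)) atTop (𝓝 v)) :
    ∃ s : ι → ℝ, (∀ j, 0 ≤ s j) ∧ (∀ j, c j xbar ≠ 0 → s j = 0) ∧
      ∑ j, s j • pgrad ν (c j) xbar = v := by
  classical
  set A := Finset.univ.filter fun j => c j xbar = 0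
  have hsumA : ∀ l, ∑ j ∈ A, d l j • pgrad ν (c j) (y l) = ∑ j, d l j • pgrad ν (c j) (y l) :=
    fun l => Finset.sum_filter_of_ne fun j _ hj =>
      by_contra fun hj' => hj (by rw [hd_active l j hj', zero_smul])
  choose I hIA e he hesum hI using fun l =>
    exists_linearIndepOn_conic_repr A (fun j => pgrad ν (c j) (y l)) fun j _ => hd l j
  obtain ⟨S, hS⟩ := frequently_exists.mp (Frequently.of_forall fun l => ⟨I l, rfl⟩ :
    ∃ᶠ l in atTop, ∃ S, I l = S)
  obtain ⟨φ, hφ, hIφ⟩ := extraction_of_frequently_atTop hS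
  have hSA : S ⊆ A := hIφ 0 ▸ hIA (φ 0)
  have hyφ := hy.comp hφ.tendsto_atTop
  rcases exists_nonneg_repr_or_posLinDep_of_tendsto S (fun j => (hc j).tendsto.comp hyφ)
      (a := fun l j => pgrad ν (c j) (y (φ l))) (e := fun l => e (φ l)) (fun l => hIφ l ▸ he (φ l))
      (hv.comp hφ.tendsto_atTop |>.congr fun l => by
        rw [comp_apply, ← hIφ l, hesum, hsumA])
    with ⟨s, hs, hsS, hsum⟩ | hpos
  · refine ⟨s, hs, fun j hj => hsS j fun hjS => hj (Finset.mem_filter.mp (hSA hjS)).2, ?_⟩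
    rwa [← Finset.sum_subset (Finset.subset_univ S) fun j _ hj => by rw [hsS j hj, zero_smul]]
  · obtain ⟨U, hU, hdep⟩ := hcpld S (fun j hj => (Finset.mem_filter.mp (hSA hj)).2) hpos
    obtain ⟨l, hl⟩ := (hyφ.eventually_mem hU).exists
    have hli := hI (φ l)
    rw [hIφ l] at hli
    exact (hli.not_linDep (hdep _ hl)).elim

section RealSequences

lemma MapClusterPt.comp_add_nat {X : Type*} [TopologicalSpace X] {x : ℕ → X} {a : X}
    (hx : MapClusterPt a atTop x) (k : ℕ) : MapClusterPt a atTop fun l => x (l + k) := by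
  rwa [MapClusterPt, ← Function.comp_def, ← Filter.map_map, map_add_atTop_eq_nat]

lemma tendsto_zero_of_eventually_le_mul {V : ℕ → ℝ} {τ : ℝ} (hV : ∀ k, 0 ≤ V k) (hτ : τ < 1)
    (h : ∀ᶠ k in atTop, V (k + 1) ≤ τ * V k) : Tendsto V atTop (𝓝 0) :=
  (summable_of_ratio_norm_eventually_le hτ <| h.mono fun k hk => by
    rwa [Real.norm_of_nonneg (hV _), Real.norm_of_nonneg (hV _)]).tendsto_atTop_zero

lemma tendsto_zero_of_sqrt_sum_sq_le {ι : Type*} [Fintype ι] {f : ℕ → ι → ℝ} {ε : ℕ → ℝ}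
    (hf : ∀ k, √(∑ i, f k i ^ 2) ≤ ε k) (hε : Tendsto ε atTop (𝓝 0)) (i : ι) :
    Tendsto (fun k => f k i) atTop (𝓝 0) :=
  squeeze_zero_norm (fun k => (Real.abs_le_sqrt (Finset.single_le_sum
    (fun j _ => sq_nonneg (f k j)) (Finset.mem_univ i))).trans (hf k)) hε

lemma nonneg_of_tendsto_min {a b : ℕ → ℝ} {a₀ : ℝ} (ha : Tendsto a atTop (𝓝 a₀))
    (h : Tendsto (fun l => min (a l) (b l)) atTop (𝓝 0)) : 0 ≤ a₀ :=
  le_of_tendsto_of_tendsto' h ha fun _ => min_le_left _ _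

lemma nonpos_of_tendsto_min_neg {X : Type*} [TopologicalSpace X] {f : X → ℝ} {x₀ : X}
    {y : ℕ → X} {b : ℕ → ℝ} (hf : ContinuousAt f x₀) (hy : Tendsto y atTop (𝓝 x₀))
    (h : Tendsto (fun l => min (-f (y l)) (b l)) atTop (𝓝 0)) : f x₀ ≤ 0 :=
  neg_nonneg.mp (nonneg_of_tendsto_min (hf.tendsto.comp hy).neg h)

/-- Approximate complementarity `min (a l) (b l) → 0` with `a l → a₀` forces `b l → 0` if
`a₀ > 0`, and `min (b l) 0 → 0` if `a₀ = 0`. -/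
lemma tendsto_sub_truncate_of_tendsto_min {a b : ℕ → ℝ} {a₀ : ℝ} (ha : Tendsto a atTop (𝓝 a₀))
    (h : Tendsto (fun l => min (a l) (b l)) atTop (𝓝 0)) :
    Tendsto (fun l => b l - if a₀ = 0 then max (b l) 0 else 0) atTop (𝓝 0) := by
  rcases (nonneg_of_tendsto_min ha h).eq_or_lt with rfl | hpos
  · have hmin_eq : ∀ l, b l - max (b l) 0 = min (b l) 0 - min (a l) (b l) + min (a l) (b l) :=
      fun l => by rcases le_total (b l) 0 with hb | hb <;> simp [hb]
    have hbound : ∀ l, ‖min (b l) 0 - min (a l) (b l)‖ ≤ ‖a l‖ := fun l => by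
      simpa [min_comm (a l)] using abs_min_sub_min_le_max (b l) 0 (b l) (a l)
    have hgap : Tendsto (fun l => min (b l) 0 - min (a l) (b l)) atTop (𝓝 0) :=
      squeeze_zero_norm hbound (by simpa using ha.norm)
    simpa only [if_true, hmin_eq, add_zero] using hgap.add h
  · simp only [hpos.ne', if_false, sub_zero]
    refine h.congr' ?_
    filter_upwards [ha.eventually (lt_mem_nhds (half_lt_self hpos)),
      h.eventually (gt_mem_nhds (half_pos hpos))] with l hal hmin
    rcases le_total (a l) (b l) with hab | hab
    · linarith [min_eq_left hab]
    · exact min_eq_right hab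

lemma tendsto_inv_mul_max_add_mul {ρ u a : ℕ → ℝ} {a₀ C : ℝ} (hρ : Tendsto ρ atTop atTop)
    (hu : ∀ l, |u l| ≤ C) (ha : Tendsto a atTop (𝓝 a₀)) :
    Tendsto (fun l => (ρ l)⁻¹ * max (u l + ρ l * a l) 0) atTop (𝓝 (max a₀ 0)) := by
  have hinv := tendsto_inv_atTop_zero.comp hρ
  have hu_div : Tendsto (fun l => (ρ l)⁻¹ * u l) atTop (𝓝 0) :=
    hinv.zero_mul_isBoundedUnder_le (isBoundedUnder_of ⟨C, hu⟩)
  have heq : ∀ᶠ l in atTop, max ((ρ l)⁻¹ * u l + a l) 0 = (ρ l)⁻¹ * max (u l + ρ l * a l) 0 := by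
    filter_upwards [hρ.eventually_gt_atTop 0] with l hl
    rw [mul_max_of_nonneg _ _ (inv_nonneg.mpr hl.le), mul_zero, mul_add,
      inv_mul_cancel_left₀ hl.ne']
  simpa using ((hu_div.add ha).max tendsto_const_nhds).congr' heq

end RealSequences

/-- The penalty update rule of Algorithm 3.1. -/
def IsPenaltyUpdate (ρ : ℕ → ℝ) (γ : ℝ) (P : ℕ → Prop) : Prop :=
  ∀ k, (P k → ρ (k + 1) = ρ k) ∧ (¬ P k → ρ (k + 1) = γ * ρ k)

namespace IsPenaltyUpdate

variable {ρ : ℕ → ℝ} {γ : ℝ} {P : ℕ → Prop}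

lemma pos (hρ : IsPenaltyUpdate ρ γ P) (hγ : 0 < γ) (h0 : 0 < ρ 0) (k : ℕ) : 0 < ρ k := by
  induction k with
  | zero => exact h0
  | succ k ih =>
    by_cases hP : P k
    · rwa [(hρ k).1 hP]
    · rw [(hρ k).2 hP]; positivity

lemma monotone (hρ : IsPenaltyUpdate ρ γ P) (hγ : 1 ≤ γ) (h0 : 0 < ρ 0) : Monotone ρ := by
  refine monotone_nat_of_le_succ fun k => ?_
  by_cases hP : P k
  · rw [(hρ k).1 hP]
  · rw [(hρ k).2 hP]
    exact le_mul_of_one_le_left (hρ.pos (by linarith) h0 k).le hγ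

/-- A bounded penalty sequence converges to a positive limit, which a factor `γ > 1` would
overshoot: hence the test eventually always passes. -/
lemma eventually_of_bddAbove (hρ : IsPenaltyUpdate ρ γ P) (hγ : 1 < γ) (h0 : 0 < ρ 0)
    (hB : BddAbove (Set.range ρ)) : ∀ᶠ k in atTop, P k := by
  have hlim := tendsto_atTop_ciSup (hρ.monotone hγ.le h0) hB
  have hpos : 0 < ⨆ k, ρ k := h0.trans_le (le_ciSup hB 0)
  filter_upwards [(hlim.comp (tendsto_add_atTop_nat 1)).eventually_lt (hlim.const_mul γ)
    (lt_mul_left hpos hγ)] with k hk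
  by_contra hP
  exact hk.ne ((hρ k).2 hP)

end IsPenaltyUpdate

/-- KKT points of player `ν`'s problem in the Feasibility GNEP: minimise `‖(g x)₊‖²` subject to
`h x ≤ 0`. -/
def IsFeasibilityKKT {N : ℕ} {n : Fin N → ℕ} {ι κ : Type*} [Fintype ι] [Fintype κ] (ν : Fin N)
    (g : ι → Strat n → ℝ) (h : κ → Strat n → ℝ) (x : Strat n) : Prop :=
  ∃ w : κ → ℝ, (pgrad ν (fun y => ∑ i, max (g i y) 0 ^ 2) x + ∑ j, w j • pgrad ν (h j) x = 0) ∧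
    ∀ j, min (-(h j x)) (w j) = 0

section FeasibilityKKT

variable {N : ℕ} {n : Fin N → ℕ} {ι κ : Type*} [Fintype ι] [Fintype κ] {ν : Fin N}
  {g : ι → Strat n → ℝ} {h : κ → Strat n → ℝ} {xbar : Strat n}

lemma isFeasibilityKKT_of_nonneg_repr (hg : ∀ i, DifferentiableAt ℝ (g i) xbar)
    (hh : ∀ j, h j xbar ≤ 0) {s : κ → ℝ} (hs : ∀ j, 0 ≤ s j)
    (hs_active : ∀ j, h j xbar ≠ 0 → s j = 0)
    (hsum : ∑ j, s j • pgrad ν (h j) xbar = -∑ i, max (g i xbar) 0 • pgrad ν (g i) xbar) :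
    IsFeasibilityKKT ν g h xbar := by
  refine ⟨fun j => 2 * s j, ?_, fun j => ?_⟩
  · simp only [pgrad_sum_max_zero_sq hg, mul_smul, ← Finset.smul_sum, hsum, smul_neg,
      add_neg_cancel]
  · by_cases hj : h j xbar = 0
    · simp [hj, hs j]
    · simp [hs_active j hj, hh j]

/-- Dividing the approximate stationarity of the penalised subproblems by `ρ l → ∞` leaves only
the constraint terms; the parts of the multipliers `μ` that vanish asymptotically (negative
parts, inactive constraints) can be dropped. -/
lemma tendsto_sum_truncated_multiplier_smul {θ : Strat n → ℝ} (hθ : ContDiff ℝ 1 θ)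
    (hg : ∀ i, ContDiff ℝ 1 (g i)) (hh : ∀ j, ContDiff ℝ 1 (h j)) {y : ℕ → Strat n}
    (hy : Tendsto y atTop (𝓝 xbar)) {ρ : ℕ → ℝ} (hρ : Tendsto ρ atTop atTop) {u : ℕ → ι → ℝ}
    {C : ℝ} (hu : ∀ l i, |u l i| ≤ C) {μ : ℕ → κ → ℝ}
    (hμ : ∀ j, Tendsto (fun l => min (-(h j (y l))) (μ l j)) atTop (𝓝 0)) {M : ℝ}
    (hstat : ∀ l, ‖pgrad ν θ (y l)
        + ∑ i, max (u l i + ρ l * g i (y l)) 0 • pgrad ν (g i) (y l)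
        + ∑ j, μ l j • pgrad ν (h j) (y l)‖ ≤ M) :
    Tendsto (fun l => ∑ j, ((ρ l)⁻¹ * if h j xbar = 0 then max (μ l j) 0 else 0) •
      pgrad ν (h j) (y l)) atTop (𝓝 (-∑ i, max (g i xbar) 0 • pgrad ν (g i) xbar)) := by
  have hpgrad : ∀ {f : Strat n → ℝ}, ContDiff ℝ 1 f →
      Tendsto (fun l => pgrad ν f (y l)) atTop (𝓝 (pgrad ν f xbar)) := fun hf =>
    ((continuous_pgrad hf ν).tendsto xbar).comp hy
  have hinv : Tendsto (fun l => (ρ l)⁻¹) atTop (𝓝 0) := tendsto_inv_atTop_zero.comp hρ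
  have hstat_div := hinv.zero_smul_isBoundedUnder_le (isBoundedUnder_of ⟨M, hstat⟩)
  have hθ_div : Tendsto (fun l => (ρ l)⁻¹ • pgrad ν θ (y l)) atTop (𝓝 0) := by
    simpa using hinv.smul (hpgrad hθ)
  have hg_div : Tendsto (fun l => ∑ i, ((ρ l)⁻¹ * max (u l i + ρ l * g i (y l)) 0) •
      pgrad ν (g i) (y l)) atTop (𝓝 (∑ i, max (g i xbar) 0 • pgrad ν (g i) xbar)) :=
    tendsto_finsetSum _ fun i _ => (tendsto_inv_mul_max_add_mul hρ (fun l => hu l i)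
      (((hg i).continuous.tendsto xbar).comp hy)).smul (hpgrad (hg i))
  have hμ_div : Tendsto (fun l => ∑ j, ((ρ l)⁻¹ *
      (μ l j - if h j xbar = 0 then max (μ l j) 0 else 0)) • pgrad ν (h j) (y l))
      atTop (𝓝 0) := by
    simpa [neg_eq_zero] using tendsto_finsetSum Finset.univ fun j _ =>
      (hinv.mul (tendsto_sub_truncate_of_tendsto_min
        (((hh j).continuous.tendsto xbar).comp hy).neg (hμ j))).smul (hpgrad (hh j))
  refine (((hstat_div.sub hθ_div).sub hg_div).sub hμ_div).congr (fun l => ?_) |>.trans ?_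
  · simp only [smul_add, Finset.smul_sum, smul_smul, mul_sub, sub_smul, Finset.sum_sub_distrib]
    abel
  · simp

theorem isFeasibilityKKT_of_tendsto_penalty_atTop {θ : Strat n → ℝ} (hθ : ContDiff ℝ 1 θ)
    (hg : ∀ i, ContDiff ℝ 1 (g i)) (hh : ∀ j, ContDiff ℝ 1 (h j)) (hcpld : CPLDnu ν h xbar)
    {y : ℕ → Strat n} (hy : Tendsto y atTop (𝓝 xbar)) {ρ : ℕ → ℝ}
    (hρ : Tendsto ρ atTop atTop) (hρ_pos : ∀ l, 0 < ρ l) {u : ℕ → ι → ℝ} {C : ℝ}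
    (hu : ∀ l i, |u l i| ≤ C) {μ : ℕ → κ → ℝ}
    (hμ : ∀ j, Tendsto (fun l => min (-(h j (y l))) (μ l j)) atTop (𝓝 0)) {M : ℝ}
    (hstat : ∀ l, ‖pgrad ν θ (y l)
        + ∑ i, max (u l i + ρ l * g i (y l)) 0 • pgrad ν (g i) (y l)
        + ∑ j, μ l j • pgrad ν (h j) (y l)‖ ≤ M) :
    IsFeasibilityKKT ν g h xbar := by
  have hfeas : ∀ j, h j xbar ≤ 0 := fun j =>
    nonpos_of_tendsto_min_neg (hh j).continuous.continuousAt hy (hμ j)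
  obtain ⟨s, hs, hs_active, hsum⟩ := hcpld.exists_nonneg_repr_of_tendsto
    (fun j => (continuous_pgrad (hh j) ν).continuousAt) hy
    (fun l j => mul_nonneg (inv_nonneg.mpr (hρ_pos l).le) (by split_ifs <;> simp))
    (fun l j hj => by simp [hj]) (tendsto_sum_truncated_multiplier_smul hθ hg hh hy hρ hu hμ hstat)
  exact isFeasibilityKKT_of_nonneg_repr (fun i => (hg i).differentiable one_ne_zero xbar) hfeas hs
    hs_active hsum

end FeasibilityKKT

theorem stmt10_general {N : ℕ} {n m p : Fin N → ℕ}
    (θ : Fin N → Strat n → ℝ)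
    (g : (ν : Fin N) → Fin (m ν) → Strat n → ℝ)
    (h : (ν : Fin N) → Fin (p ν) → Strat n → ℝ)
    (hθ : ∀ ν, ContDiff ℝ 1 (θ ν))
    (hg : ∀ ν i, ContDiff ℝ 1 (g ν i))
    (hh : ∀ ν j, ContDiff ℝ 1 (h ν j))
    (x : ℕ → Strat n)
    (lam : (k : ℕ) → (ν : Fin N) → Fin (m ν) → ℝ)
    (mu : (k : ℕ) → (ν : Fin N) → Fin (p ν) → ℝ)
    (u : (k : ℕ) → (ν : Fin N) → Fin (m ν) → ℝ)
    (rho : ℕ → Fin N → ℝ)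
    (umax : ℝ) (τ γ : Fin N → ℝ)
    (humax : 0 ≤ umax)
    (hτ : ∀ ν, τ ν ∈ Set.Ioo (0:ℝ) 1)
    (hγ : ∀ ν, 1 < γ ν)
    (hrho0 : ∀ ν, 0 < rho 0 ν)
    (hu0 : ∀ ν i, u 0 ν i ∈ Set.Icc 0 umax)
    (hlam : ∀ k ν i, lam (k+1) ν i = max (u k ν i + rho k ν * g ν i (x (k+1))) 0)
    (hu : ∀ k ν i, u (k+1) ν i = min (lam (k+1) ν i) umax)
    (hrho : ∀ k ν,
      (Real.sqrt (∑ i, (min (-(g ν i (x (k+1)))) (lam (k+1) ν i)) ^ 2) ≤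
          τ ν * Real.sqrt (∑ i, (min (-(g ν i (x k))) (lam k ν i)) ^ 2) →
        rho (k+1) ν = rho k ν) ∧
      (¬ (Real.sqrt (∑ i, (min (-(g ν i (x (k+1)))) (lam (k+1) ν i)) ^ 2) ≤
          τ ν * Real.sqrt (∑ i, (min (-(g ν i (x k))) (lam k ν i)) ^ 2)) →
        rho (k+1) ν = γ ν * rho k ν))
    (eps eps' : ℕ → ℝ)
    (heps' : Tendsto eps' atTop (𝓝 0))
    (hA1 : ∀ k ν, ‖pgrad ν (θ ν) (x (k+1))
        + ∑ i, max (u k ν i + rho k ν * g ν i (x (k+1))) 0 • pgrad ν (g ν i) (x (k+1))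
        + ∑ j, mu (k+1) ν j • pgrad ν (h ν j) (x (k+1))‖ ≤ eps k)
    (hA2 : ∀ k ν, Real.sqrt (∑ j, (min (-(h ν j (x (k+1)))) (mu (k+1) ν j)) ^ 2) ≤ eps' k)
    (hepsbd : ∃ M, ∀ k, eps k ≤ M)
    (xbar : Strat n)
    (hclus : MapClusterPt xbar atTop x)
    (hCPLD : ∀ ν, CPLDnu ν (h ν) xbar) :
    ∀ ν, ∃ w : Fin (p ν) → ℝ,
      (pgrad ν (fun y => ∑ i, max (g ν i y) 0 ^ 2) xbar
        + ∑ j, w j • pgrad ν (h ν j) xbar = 0) ∧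
      (∀ j, min (-(h ν j xbar)) (w j) = 0) := by
  intro ν
  obtain ⟨M, hM⟩ := hepsbd
  obtain ⟨φ, hφ, hxφ⟩ := (MapClusterPt.comp_add_nat hclus 1).tendsto_subseq
  have hφ_top := hφ.tendsto_atTop
  have hρ : IsPenaltyUpdate (rho · ν) (γ ν) _ := fun k => hrho k ν
  have hμ : ∀ j, Tendsto (fun l => min (-(h ν j (x (φ l + 1)))) (mu (φ l + 1) ν j)) atTop (𝓝 0) :=
    tendsto_zero_of_sqrt_sum_sq_le (fun l => hA2 (φ l) ν) (heps'.comp hφ_top)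
  by_cases hB : BddAbove (Set.range (rho · ν))
  · have hres : Tendsto (fun k => √(∑ i, min (-(g ν i (x k))) (lam k ν i) ^ 2)) atTop (𝓝 0) :=
      tendsto_zero_of_eventually_le_mul (fun k => Real.sqrt_nonneg _) (hτ ν).2
        (hρ.eventually_of_bddAbove (hγ ν) (hrho0 ν) hB)
    have hg_feas : ∀ i, g ν i xbar ≤ 0 := fun i =>
      nonpos_of_tendsto_min_neg (hg ν i).continuous.continuousAt hxφ
        ((tendsto_zero_of_sqrt_sum_sq_le (fun k => le_rfl) hres i).comp
          ((tendsto_add_atTop_nat 1).comp hφ_top))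
    exact isFeasibilityKKT_of_nonneg_repr (s := 0)
      (fun i => (hg ν i).differentiable one_ne_zero xbar)
      (fun j => nonpos_of_tendsto_min_neg (hh ν j).continuous.continuousAt hxφ (hμ j))
      (fun _ => le_rfl) (fun _ _ => rfl) (by simp [hg_feas])
  · have hu_bd : ∀ k i, u k ν i ∈ Set.Icc 0 umax := by
      rintro (_ | k) i
      · exact hu0 ν i
      · rw [hu, hlam]; exact ⟨le_min (le_max_right _ _) humax, min_le_right _ _⟩
    exact isFeasibilityKKT_of_tendsto_penalty_atTop (hθ ν) (hg ν) (hh ν) (hCPLD ν) hxφ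
      ((tendsto_atTop_atTop_of_monotone' (hρ.monotone (hγ ν).le (hrho0 ν)) hB).comp hφ_top)
      (fun l => hρ.pos (zero_lt_one.trans (hγ ν)) (hrho0 ν) _)
      (fun l i => (abs_of_nonneg (hu_bd (φ l) i).1).trans_le (hu_bd (φ l) i).2) hμ
      (fun l => (hA1 (φ l) ν).trans (hM _))

/-- **Corollary 4.2.** If each `h ν` satisfies CPLD with respect to player `ν`
at a limit point `xbar` of the augmented Lagrangian iterates, then `xbar` is a KKT point of
the Feasibility GNEP. -/
theorem stmt10 {N : ℕ} {n m p : Fin N → ℕ}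
    (θ : Fin N → Strat n → ℝ)
    (g : (ν : Fin N) → Fin (m ν) → Strat n → ℝ)
    (h : (ν : Fin N) → Fin (p ν) → Strat n → ℝ)
    (hθ : ∀ ν, ContDiff ℝ 1 (θ ν))
    (hg : ∀ ν i, ContDiff ℝ 1 (g ν i))
    (hh : ∀ ν j, ContDiff ℝ 1 (h ν j))
    (x : ℕ → Strat n)
    (lam : (k : ℕ) → (ν : Fin N) → Fin (m ν) → ℝ)
    (mu : (k : ℕ) → (ν : Fin N) → Fin (p ν) → ℝ)
    (u : (k : ℕ) → (ν : Fin N) → Fin (m ν) → ℝ)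
    (rho : ℕ → Fin N → ℝ)
    (umax : ℝ) (τ γ : Fin N → ℝ)
    (humax : 0 ≤ umax)
    (hτ : ∀ ν, τ ν ∈ Set.Ioo (0:ℝ) 1)
    (hγ : ∀ ν, 1 < γ ν)
    (hrho0 : ∀ ν, 0 < rho 0 ν)
    (hu0 : ∀ ν i, u 0 ν i ∈ Set.Icc 0 umax)
    (hlam : ∀ k ν i, lam (k+1) ν i = max (u k ν i + rho k ν * g ν i (x (k+1))) 0)
    (hu : ∀ k ν i, u (k+1) ν i = min (lam (k+1) ν i) umax)
    (hrho : ∀ k ν,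
      (Real.sqrt (∑ i, (min (-(g ν i (x (k+1)))) (lam (k+1) ν i)) ^ 2) ≤
          τ ν * Real.sqrt (∑ i, (min (-(g ν i (x k))) (lam k ν i)) ^ 2) →
        rho (k+1) ν = rho k ν) ∧
      (¬ (Real.sqrt (∑ i, (min (-(g ν i (x (k+1)))) (lam (k+1) ν i)) ^ 2) ≤
          τ ν * Real.sqrt (∑ i, (min (-(g ν i (x k))) (lam k ν i)) ^ 2)) →
        rho (k+1) ν = γ ν * rho k ν))
    (eps eps' : ℕ → ℝ)
    (heps0 : ∀ k, 0 ≤ eps k)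
    (heps'0 : ∀ k, 0 ≤ eps' k)
    (heps' : Tendsto eps' atTop (𝓝 0))
    (hA1 : ∀ k ν, ‖pgrad ν (θ ν) (x (k+1))
        + ∑ i, max (u k ν i + rho k ν * g ν i (x (k+1))) 0 • pgrad ν (g ν i) (x (k+1))
        + ∑ j, mu (k+1) ν j • pgrad ν (h ν j) (x (k+1))‖ ≤ eps k)
    (hA2 : ∀ k ν, Real.sqrt (∑ j, (min (-(h ν j (x (k+1)))) (mu (k+1) ν j)) ^ 2) ≤ eps' k)
    (hepsbd : ∃ M, ∀ k, eps k ≤ M)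
    (xbar : Strat n)
    (hclus : MapClusterPt xbar atTop x)
    (hCPLD : ∀ ν, CPLDnu ν (h ν) xbar) :
    ∀ ν, ∃ w : Fin (p ν) → ℝ,
      (pgrad ν (fun y => ∑ i, max (g ν i y) 0 ^ 2) xbar
        + ∑ j, w j • pgrad ν (h ν j) xbar = 0) ∧
      (∀ j, min (-(h ν j xbar)) (w j) = 0) :=
  stmt10_general θ g h hθ hg hh x lam mu u rho umax τ γ humax hτ hγ hrho0 hu0 hlam hu hrho eps eps'
    heps' hA1 hA2 hepsbd xbar hclus hCPLD
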